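/- Let f, g : X → Y be globally multi-split continuous functions, and let h : X → Y satisfy h(x) ∈ {f(x), g(x)} for all x ∈ X. Then h is globally multi-split continuous. -/

import Mathlib

open Filter Topology Set

universe u v w

variable {X : Type u} {Y : Type v} [TopologicalSpace X] [TopologicalSpace Y]

/-- `Z` is a set of extended values of `f` at `p`. -/
def ExtendedValues (f : X → Y) (p : X) (Z : Set Y) : Prop :=
  Z.Finite ∧ Z.Nonempty ∧
    (∀ y ∈ Z, ∀ U ∈ 𝓝 p, ∀ V ∈ 𝓝 y, (f '' U ∩ V).Nonempty) ∧
    (∀ V ∈ 𝓝ˢ Z, ∃ U ∈ 𝓝 p, f '' U ⊆ V)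

/-- `f` is multi-split continuous at `p`. -/
def MultiSplitAt (f : X → Y) (p : X) : Prop := ∃ Z : Set Y, ExtendedValues f p Z

/-!
Take for `h` at `p` the points of `Zf ∪ Zg` that are cluster values of `h` at `p`. Near `p`, both
`f` and `g`, hence `h`, map into any neighbourhood of `Zf ∪ Zg`. Each remaining point of `Zf ∪ Zg`
has a neighbourhood that `h` eventually avoids, and by finiteness it avoids all of them at once, so
`h` maps into any neighbourhood of the chosen points. That set is nonempty because `𝓝 p ≠ ⊥`.
-/

section

variable {α β : Type*}

theorem Filter.Tendsto.sup_of_eventually_eq_or {l : Filter α} {a b : Filter β} {f g h : α → β}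
    (hf : Tendsto f l a) (hg : Tendsto g l b) (hh : ∀ᶠ x in l, h x = f x ∨ h x = g x) :
    Tendsto h l (a ⊔ b) := by
  intro V hV
  refine mem_map.2 ?_
  filter_upwards [hf hV.1, hg hV.2, hh] with x hfx hgx hx
  rcases hx with hx | hx <;> rw [Set.mem_preimage, hx] <;> assumption

variable [TopologicalSpace β]

theorem Filter.Tendsto.nhdsSet_sep_mapClusterPt {l : Filter α} {h : α → β} {F : Set β}
    (hF : F.Finite) (hh : Tendsto h l (𝓝ˢ F)) :
    Tendsto h l (𝓝ˢ {y ∈ F | MapClusterPt y l h}) := by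
  set Z := {y ∈ F | MapClusterPt y l h}
  have hle : map h l ≤ 𝓝ˢ Z ⊔ 𝓝ˢ (F \ Z) := by
    rw [← nhdsSet_union, Set.union_sdiff_cancel (Set.sep_subset F _)]
    exact hh
  have hdisj : Disjoint (map h l) (𝓝ˢ (F \ Z)) := by
    rw [hF.sdiff.isCompact.disjoint_nhdsSet_right]
    intro y hy
    have hy' : ¬MapClusterPt y l h := fun hc => hy.2 ⟨hy.1, hc⟩
    rwa [mapClusterPt_def, clusterPt_iff_not_disjoint, not_not, disjoint_comm] at hy'
  exact hdisj.left_le_of_le_sup_right hle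

theorem Set.Nonempty.of_tendsto_nhdsSet {l : Filter α} [l.NeBot] {h : α → β} {Z : Set β}
    (hh : Tendsto h l (𝓝ˢ Z)) : Z.Nonempty := by
  rw [Set.nonempty_iff_ne_empty]
  rintro rfl
  rw [nhdsSet_empty] at hh
  exact hh.neBot.ne rfl

end

theorem extendedValues_iff {f : X → Y} {p : X} {Z : Set Y} :
    ExtendedValues f p Z ↔
      Z.Finite ∧ Z.Nonempty ∧ (∀ y ∈ Z, MapClusterPt y (𝓝 p) f) ∧ Tendsto f (𝓝 p) (𝓝ˢ Z) := by
  have hcluster (y : Y) :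
      (∀ U ∈ 𝓝 p, ∀ V ∈ 𝓝 y, (f '' U ∩ V).Nonempty) ↔ MapClusterPt y (𝓝 p) f := by
    rw [mapClusterPt_def, (𝓝 y).basis_sets.clusterPt_iff ((𝓝 p).basis_sets.map f)]
    simp only [id, Set.inter_comm]
    exact forall₂_comm
  have htendsto : (∀ V ∈ 𝓝ˢ Z, ∃ U ∈ 𝓝 p, f '' U ⊆ V) ↔ Tendsto f (𝓝 p) (𝓝ˢ Z) := by
    simp only [(𝓝 p).basis_sets.tendsto_left_iff, Set.mapsTo_iff_image_subset, id]
  simp only [ExtendedValues, hcluster, htendsto]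

theorem stmt14 (f g h : X → Y)
    (hf : ∀ p : X, MultiSplitAt f p) (hg : ∀ p : X, MultiSplitAt g p)
    (hh : ∀ x : X, h x = f x ∨ h x = g x) :
    ∀ p : X, MultiSplitAt h p := by
  intro p
  obtain ⟨Zf, hZf⟩ := hf p
  obtain ⟨Zg, hZg⟩ := hg p
  obtain ⟨hZf_fin, -, -, hf_tendsto⟩ := extendedValues_iff.1 hZf
  obtain ⟨hZg_fin, -, -, hg_tendsto⟩ := extendedValues_iff.1 hZg
  have hF_fin : (Zf ∪ Zg).Finite := hZf_fin.union hZg_fin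
  have hF : Tendsto h (𝓝 p) (𝓝ˢ (Zf ∪ Zg)) := by
    rw [nhdsSet_union]
    exact hf_tendsto.sup_of_eventually_eq_or hg_tendsto (Eventually.of_forall hh)
  have hZ := hF.nhdsSet_sep_mapClusterPt hF_fin
  exact ⟨_, extendedValues_iff.2
    ⟨hF_fin.subset (Set.sep_subset _ _), .of_tendsto_nhdsSet hZ, fun _ hy => hy.2, hZ⟩⟩
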